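/- One-dimensional DR example with disjoint fixed-point sets: In X = ℝ, let A := N_{{1}} (the normal cone to the singleton {1}) and let B := ∂g with g = −ln on (0,∞), so J_{γB}x = (x + √(x² + 4γ))/2. Then for every γ > 0, the Douglas–Rachford operator satisfies T_γ x = (x + √((2 − x)² + 4γ))/2, and Fix T_γ = {1 + γ}. In particular, Fix T_γ ∩ Fix T_δ = ∅ whenever γ ≠ δ. -/

import Mathlib

open Filter
open scoped RealInnerProductSpace NNReal

/-- A set-valued operator is monotone. -/
def IsMonotoneOp {X : Type*} [NormedAddCommGroup X] [InnerProductSpace ℝ X]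
    (A : X → Set X) : Prop :=
  ∀ ⦃x y u v : X⦄, u ∈ A x → v ∈ A y → 0 ≤ ⟪x - y, u - v⟫

/-- A set-valued operator is maximally monotone. -/
def IsMaximalMonotoneOp {X : Type*} [NormedAddCommGroup X] [InnerProductSpace ℝ X]
    (A : X → Set X) : Prop :=
  IsMonotoneOp A ∧
    ∀ x u : X, (∀ y v : X, v ∈ A y → 0 ≤ ⟪x - y, u - v⟫) → u ∈ A x

/-- `J` is the resolvent of `γ • A`, i.e. `J = (Id + γ A)⁻¹`:
for every `x`, `x ∈ J x + γ • A (J x)`. -/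
def IsResolventOf {X : Type*} [NormedAddCommGroup X] [InnerProductSpace ℝ X]
    (J : X → X) (A : X → Set X) (γ : ℝ) : Prop :=
  ∀ x : X, γ⁻¹ • (x - J x) ∈ A (J x)

/-- The normal cone operator to the singleton {1} in ℝ. -/
def normalConeOne : ℝ → Set ℝ := fun x => if x = 1 then Set.univ else ∅

/-- The subdifferential of g = -ln on (0, ∞). -/
def negLogSubdiff : ℝ → Set ℝ := fun x => if 0 < x then {-(1 / x)} else ∅

/-- The resolvent of γ·∂(-ln). -/
noncomputable def JnegLog (γ x : ℝ) : ℝ := (x + Real.sqrt (x ^ 2 + 4 * γ)) / 2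

/-- The Douglas–Rachford operator for (γ N_{1}, γ ∂(-ln)),
using J_{γA} = const 1, so R_{γA} x = 2 - x. -/
noncomputable def TDR (γ x : ℝ) : ℝ := x - 1 + JnegLog γ ((2:ℝ) * 1 - x)

/-!
`J := JnegLog γ` picks the positive root `t = J y` of `t * (t - y) = γ`, and that equation is the
resolvent equation `γ⁻¹ (y - J y) = -1 / J y`. Since `J_{γA} ≡ 1`, a point `x` is fixed by `T_γ`
iff `J (2 - x) = 1`, i.e. iff `1 - (2 - x) = γ`.
-/

theorem isResolventOf_const_one_normalConeOne (γ : ℝ) :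
    IsResolventOf (fun _ : ℝ => (1 : ℝ)) normalConeOne γ := by
  simp [IsResolventOf, normalConeOne]

theorem JnegLog_pos {γ : ℝ} (hγ : 0 < γ) (y : ℝ) : 0 < JnegLog γ y := by
  have h : Real.sqrt (y ^ 2) < Real.sqrt (y ^ 2 + 4 * γ) :=
    Real.sqrt_lt_sqrt (sq_nonneg y) (by linarith)
  rw [Real.sqrt_sq_eq_abs] at h
  unfold JnegLog
  linarith [neg_abs_le y]

theorem JnegLog_mul_JnegLog_sub {γ : ℝ} (hγ : 0 ≤ γ) (y : ℝ) :
    JnegLog γ y * (JnegLog γ y - y) = γ := by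
  have hsq : Real.sqrt (y ^ 2 + 4 * γ) ^ 2 = y ^ 2 + 4 * γ :=
    Real.sq_sqrt (by positivity)
  unfold JnegLog
  linear_combination hsq / 4

theorem JnegLog_eq_iff {γ t : ℝ} (hγ : 0 ≤ γ) (ht : 0 < t) (y : ℝ) :
    JnegLog γ y = t ↔ t * (t - y) = γ := by
  constructor
  · rintro rfl
    exact JnegLog_mul_JnegLog_sub hγ y
  · intro hroot
    have hy : y = t - γ / t := by
      field_simp
      linarith
    have hdisc : y ^ 2 + 4 * γ = (t + γ / t) ^ 2 := by
      rw [hy]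
      field_simp
      ring
    rw [JnegLog, hdisc, Real.sqrt_sq (by positivity), hy]
    ring

theorem isResolventOf_JnegLog {γ : ℝ} (hγ : 0 < γ) :
    IsResolventOf (JnegLog γ) negLogSubdiff γ := by
  intro y
  have hJ := JnegLog_pos hγ y
  have hroot := JnegLog_mul_JnegLog_sub hγ.le y
  simp only [negLogSubdiff, if_pos hJ, Set.mem_singleton_iff, smul_eq_mul]
  field_simp
  linarith

theorem TDR_eq (γ x : ℝ) : TDR γ x = (x + Real.sqrt ((2 - x) ^ 2 + 4 * γ)) / 2 := by
  rw [TDR, JnegLog, mul_one]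
  ring

theorem TDR_eq_self_iff (γ x : ℝ) : TDR γ x = x ↔ JnegLog γ (2 - x) = 1 := by
  rw [TDR, mul_one]
  constructor <;> intro h <;> linarith

theorem fixedPoints_TDR {γ : ℝ} (hγ : 0 ≤ γ) : {x : ℝ | TDR γ x = x} = {1 + γ} := by
  ext x
  rw [Set.mem_ofPred_eq, Set.mem_singleton_iff, TDR_eq_self_iff, JnegLog_eq_iff hγ one_pos]
  constructor <;> intro h <;> linarith

theorem oneDim_DR_disjoint_fixed_points :
    ∀ γ : ℝ, 0 < γ →
      IsResolventOf (fun _ : ℝ => (1:ℝ)) normalConeOne γ ∧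
      IsResolventOf (JnegLog γ) negLogSubdiff γ ∧
      (∀ x : ℝ, TDR γ x = (x + Real.sqrt ((2 - x) ^ 2 + 4 * γ)) / 2) ∧
      {x : ℝ | TDR γ x = x} = {1 + γ} ∧
      (∀ δ : ℝ, 0 < δ → γ ≠ δ →
        {x : ℝ | TDR γ x = x} ∩ {x : ℝ | TDR δ x = x} = ∅) := by
  intro γ hγ
  refine ⟨isResolventOf_const_one_normalConeOne γ, isResolventOf_JnegLog hγ, TDR_eq γ,
    fixedPoints_TDR hγ.le, fun δ hδ hγδ => ?_⟩
  rw [fixedPoints_TDR hγ.le, fixedPoints_TDR hδ.le, Set.singleton_inter_eq_empty,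
    Set.mem_singleton_iff]
  intro h
  exact hγδ (by linarith)
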